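/- arXiv:hep-th/9906225 — 5 statements merged into one kernel-verified Lean document; each statement's English description precedes it below -/
import Mathlib

section
/- Key exchange identity in the proof of the Braided Wick Theorem. Let X and Y be objects of 𝒞 with morphisms ev : X⊗Y → 𝟙 and coev : 𝟙 → Y⊗X satisfying the zigzag (duality) identities, let γ : X → Y be an isomorphism, and set Z_2 := ev ∘ ψ_{Y,X} ∘ (id_Y ⊗ γ^{-1}) : Y^{⊗2} → 𝟙. Then for every n ≥ 2 and every morphism W : Y^{⊗(n-2)} → 𝟙 one has W ∘ (ev ⊗ id^{⊗(n-2)}) ∘ (id_X ⊗ [n-1]) ∘ (γ^{-1} ⊗ id^{⊗(n-1)}) ∘ ψ_{n-1,1} = (W ⊗ Z_2) ∘ ([n−1]′ ⊗ id_Y) as morphisms Y^{⊗n} → 𝟙 (identifying 𝟙⊗𝟙 ≅ 𝟙). -/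
/-!
Write `p := ev ∘ (γ⁻¹ ⊗ id_Y) : Y ⊗ Y → 𝟙`. By naturality of the braiding `Z₂ = p ∘ ψ_{Y,Y}`,
and `ψ_{n-1,1}` followed by splitting off the first factor is the braiding `ψ_{Y^{⊗(n-1)},Y}`,
so the identity holds for an arbitrary pairing `p`. Expanding `[n-1]` and `[n-1]′` into sums,
the `j`-th summand on the left (where `ψ_1 ⋯ ψ_j` carries the `(j+1)`-st factor to the front,
next to the braided last factor, and `p` contracts the two) matches the `(n-2-j)`-th summand on
the right (where the inverse braidings carry the same factor next to the last one and `p ∘ ψ`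
contracts them). The termwise identity is proved by induction on the number `k` of factors to the
right of the contracted one: passing from `k` to `k + 1` conjugates both sides by the braiding of
the last two factors.
-/

open CategoryTheory MonoidalCategory

universe v u

variable {C : Type u} [Category.{v} C] [MonoidalCategory C] [BraidedCategory C]
variable [Preadditive C] [MonoidalPreadditive C]

/-- The `n`-fold tensor power of an object, left-nested: `Y^{⊗0} = 𝟙_C`,
`Y^{⊗(n+1)} = Y^{⊗n} ⊗ Y`. -/
def TPow (Y : C) : ℕ → C
  | 0 => 𝟙_ C
  | n + 1 => TPow Y n ⊗ Y

/-- The braiding of the last two factors of `Y^{⊗(n+2)}` (coherences inserted). -/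
def swapLast (Y : C) (n : ℕ) : TPow Y (n + 2) ⟶ TPow Y (n + 2) :=
  (α_ (TPow Y n) Y Y).hom ≫ (𝟙 (TPow Y n) ⊗ₘ (β_ Y Y).hom) ≫ (α_ (TPow Y n) Y Y).inv

/-- `ψ_i : Y^{⊗n} → Y^{⊗n}`, the braiding of the `i`-th and `(i+1)`-st factors
(`1 ≤ i ≤ n-1`; junk identity outside this range). -/
def psiAt (Y : C) : (n : ℕ) → ℕ → (TPow Y n ⟶ TPow Y n)
  | 0, _ => 𝟙 _
  | 1, _ => 𝟙 _
  | n + 2, i => if i = n + 1 then swapLast Y n else psiAt Y (n + 1) i ⊗ₘ 𝟙 Y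

/-- The inverse braiding `ψ_i⁻¹` of the `i`-th and `(i+1)`-st factors. -/
def psiInvAt (Y : C) : (n : ℕ) → ℕ → (TPow Y n ⟶ TPow Y n)
  | 0, _ => 𝟙 _
  | 1, _ => 𝟙 _
  | n + 2, i => if i = n + 1 then
      (α_ (TPow Y n) Y Y).hom ≫ (𝟙 (TPow Y n) ⊗ₘ (β_ Y Y).inv) ≫ (α_ (TPow Y n) Y Y).inv
    else psiInvAt Y (n + 1) i ⊗ₘ 𝟙 Y

/-- `ψ_j ∘ ψ_{j-1} ∘ ⋯ ∘ ψ_1` read in application order: apply `ψ_j` first, …, `ψ_1` last;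
i.e. the composite `ψ_1∘ψ_2∘⋯∘ψ_j`. -/
def chainDesc (Y : C) (n : ℕ) : ℕ → (TPow Y n ⟶ TPow Y n)
  | 0 => 𝟙 _
  | j + 1 => psiAt Y n (j + 1) ≫ chainDesc Y n j

/-- The braided integer `[n] = Σ_{j=0}^{n-1} ψ_1∘ψ_2∘⋯∘ψ_j`. -/
def bint (Y : C) (n : ℕ) : TPow Y n ⟶ TPow Y n :=
  ∑ j ∈ Finset.range n, chainDesc Y n j

/-- `ψ_{n-1,1} = ψ_1∘ψ_2∘⋯∘ψ_{n-1}`. -/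
def psiLast (Y : C) (n : ℕ) : TPow Y n ⟶ TPow Y n := chainDesc Y n (n - 1)

/-- The composite `ψ_{n-1}⁻¹∘ψ_{n-2}⁻¹∘⋯∘ψ_{n-j}⁻¹` (apply `ψ_{n-j}⁻¹` first). -/
def chainInvDown (Y : C) (n : ℕ) : ℕ → (TPow Y n ⟶ TPow Y n)
  | 0 => 𝟙 _
  | j + 1 => psiInvAt Y n (n - (j + 1)) ≫ chainInvDown Y n j

/-- The braided integer `[n]′ = Σ_{j=0}^{n-1} ψ_{n-1}⁻¹∘ψ_{n-2}⁻¹∘⋯∘ψ_{n-j}⁻¹`. -/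
def bint' (Y : C) (n : ℕ) : TPow Y n ⟶ TPow Y n :=
  ∑ j ∈ Finset.range n, chainInvDown Y n j


/-- The coherence isomorphism `Y^{⊗(n+1)} ≅ Y ⊗ Y^{⊗n}` splitting off the first factor. -/
def splitIso (Y : C) : (n : ℕ) → (TPow Y (n + 1) ≅ Y ⊗ TPow Y n)
  | 0 => (λ_ Y) ≪≫ (ρ_ Y).symm
  | n + 1 => (whiskerRightIso (splitIso Y n) Y) ≪≫ α_ Y (TPow Y n) Y

/-- The right-hand side of the Gaussian recursion (without the final `Z_{n-2}`), for `n = m+2`: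
`(ev ⊗ id^{⊗(n-2)}) ∘ (id_X ⊗ [n-1]) ∘ (γ⁻¹ ⊗ id^{⊗(n-1)}) ∘ ψ_{n-1,1}`,
with the structural coherence isomorphisms inserted. -/
def gaussStep (X Y : C) (ev : X ⊗ Y ⟶ 𝟙_ C) (γ : X ≅ Y) (m : ℕ) :
    TPow Y (m + 2) ⟶ TPow Y m :=
  psiLast Y (m + 2) ≫
  (splitIso Y (m + 1)).hom ≫
  (γ.inv ⊗ₘ 𝟙 (TPow Y (m + 1))) ≫
  (𝟙 X ⊗ₘ bint Y (m + 1)) ≫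
  (𝟙 X ⊗ₘ (splitIso Y m).hom) ≫
  (α_ X Y (TPow Y m)).inv ≫
  (ev ⊗ₘ 𝟙 (TPow Y m)) ≫
  (λ_ (TPow Y m)).hom
open BraidedCategory

section

variable {C : Type*} [Category C] [MonoidalCategory C]

def contractHead {Y : C} (p : Y ⊗ Y ⟶ 𝟙_ C) (A : C) : Y ⊗ (Y ⊗ A) ⟶ A :=
  (α_ Y Y A).inv ≫ p ▷ A ≫ (λ_ A).hom

def contractTail {Y : C} (p : Y ⊗ Y ⟶ 𝟙_ C) (A : C) : (A ⊗ Y) ⊗ Y ⟶ A :=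
  (α_ A Y Y).hom ≫ A ◁ p ≫ (ρ_ A).hom

lemma contractTail_comp {Y A : C} (p : Y ⊗ Y ⟶ 𝟙_ C) (W : A ⟶ 𝟙_ C) :
    contractTail p A ≫ W = (α_ A Y Y).hom ≫ (W ⊗ₘ p) ≫ (λ_ (𝟙_ C)).hom := by
  rw [contractTail, tensorHom_def', unitors_equal]
  simp

variable [BraidedCategory C]

lemma braiding_whiskerLeft_braiding_contractHead {Y : C} (p : Y ⊗ Y ⟶ 𝟙_ C) (A : C) :
    (β_ (A ⊗ Y) Y).hom ≫ Y ◁ (β_ A Y).hom ≫ contractHead p A =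
      contractTail ((β_ Y Y).hom ≫ p) A := by
  calc _ = (α_ A Y Y).hom ≫ A ◁ (β_ Y Y).hom ≫ (β_ A (Y ⊗ Y)).hom ≫ p ▷ A ≫ (λ_ A).hom := by
          rw [braiding_tensor_left_hom, braiding_tensor_right_hom, contractHead]
          simp only [Category.assoc]
    _ = _ := by
          rw [← braiding_naturality_right_assoc, braiding_leftUnitor, contractTail,
            whiskerLeft_comp_assoc]

lemma braiding_whiskerLeft_contractHead_succ {Y A B : C} (p : Y ⊗ Y ⟶ 𝟙_ C)
    (x : B ⟶ Y ⊗ A) :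
    (β_ (B ⊗ Y) Y).hom ≫ Y ◁ (x ▷ Y ≫ (α_ Y A Y).hom) ≫ contractHead p (A ⊗ Y) =
      (α_ B Y Y).hom ≫ B ◁ (β_ Y Y).hom ≫ (α_ B Y Y).inv ≫
        ((β_ B Y).hom ≫ Y ◁ x ≫ contractHead p A) ▷ Y := by
  rw [braiding_tensor_left_hom, contractHead, contractHead]
  monoidal

lemma braidingInv_whiskerRight_contractTail {Y : C} (q : Y ⊗ Y ⟶ 𝟙_ C) :
    (β_ Y Y).inv ▷ Y ≫ contractTail q Y =
      (α_ Y Y Y).hom ≫ Y ◁ (β_ Y Y).hom ≫ (α_ Y Y Y).inv ≫ q ▷ Y ≫ (λ_ Y).hom := by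
  rw [contractTail, ← braiding_leftUnitor Y, braiding_naturality_right_assoc Y q,
    braiding_tensor_right_hom]
  simp only [Category.assoc, Iso.hom_inv_id_assoc]
  rw [← comp_whiskerRight_assoc, Iso.inv_hom_id, id_whiskerRight]
  simp

lemma contractTail_succ {Y A B : C} (q : Y ⊗ Y ⟶ 𝟙_ C) (z : B ⟶ A ⊗ Y) :
    (z ▷ Y ≫ (α_ A Y Y).hom ≫ A ◁ (β_ Y Y).inv ≫ (α_ A Y Y).inv) ▷ Y ≫
        contractTail q (A ⊗ Y) =
      (α_ B Y Y).hom ≫ B ◁ (β_ Y Y).hom ≫ (α_ B Y Y).inv ≫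
        (z ▷ Y ≫ contractTail q A) ▷ Y := by
  calc _ = z ▷ Y ▷ Y ⊗≫ A ◁ ((β_ Y Y).inv ▷ Y ≫ contractTail q Y) := by
          simp only [contractTail]; monoidal
    _ = z ▷ Y ▷ Y ⊗≫ A ◁ ((α_ Y Y Y).hom ≫ Y ◁ (β_ Y Y).hom ≫ (α_ Y Y Y).inv ≫ q ▷ Y ≫
          (λ_ Y).hom) := by rw [braidingInv_whiskerRight_contractTail]
    _ = z ▷ Y ▷ Y ≫ (α_ (A ⊗ Y) Y Y).hom ≫ (A ⊗ Y) ◁ (β_ Y Y).hom ≫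
          (α_ (A ⊗ Y) Y Y).inv ≫ contractTail q A ▷ Y := by
          simp only [contractTail]; monoidal
    _ = _ := by
          rw [associator_naturality_left_assoc, ← whisker_exchange_assoc,
            associator_inv_naturality_left_assoc, comp_whiskerRight]

lemma psiAt_of_lt (Y : C) {n i : ℕ} (h : i < n) : psiAt Y (n + 1) i = psiAt Y n i ▷ Y := by
  obtain _ | n := n
  · omega
  · rw [psiAt]
    exact (if_neg (by omega)).trans (tensorHom_id _ _)

lemma psiAt_last (Y : C) (n : ℕ) :
    psiAt Y (n + 2) (n + 1) =
      (α_ (TPow Y n) Y Y).hom ≫ TPow Y n ◁ (β_ Y Y).hom ≫ (α_ (TPow Y n) Y Y).inv := by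
  rw [psiAt]
  exact (if_pos rfl).trans (by rw [swapLast, id_tensorHom]; rfl)

lemma psiInvAt_of_lt (Y : C) {n i : ℕ} (h : i < n) :
    psiInvAt Y (n + 1) i = psiInvAt Y n i ▷ Y := by
  obtain _ | n := n
  · omega
  · rw [psiInvAt]
    exact (if_neg (by omega)).trans (tensorHom_id _ _)

lemma psiInvAt_last (Y : C) (n : ℕ) :
    psiInvAt Y (n + 2) (n + 1) =
      (α_ (TPow Y n) Y Y).hom ≫ TPow Y n ◁ (β_ Y Y).inv ≫ (α_ (TPow Y n) Y Y).inv := by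
  rw [psiInvAt]
  exact (if_pos rfl).trans (by rw [id_tensorHom]; rfl)

lemma chainDesc_of_lt (Y : C) {n j : ℕ} (h : j < n) :
    chainDesc Y (n + 1) j = chainDesc Y n j ▷ Y := by
  induction j with
  | zero => exact (id_whiskerRight _ _).symm
  | succ j ih =>
    rw [chainDesc, chainDesc, psiAt_of_lt Y h, ih (by omega)]
    exact (comp_whiskerRight _ _ _).symm

lemma chainDesc_self_comp_splitIso (Y : C) (n : ℕ) :
    chainDesc Y (n + 1) n ≫ (splitIso Y n).hom = (β_ (TPow Y n) Y).hom := by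
  induction n with
  | zero => exact (Category.id_comp _).trans (braiding_tensorUnit_left Y).symm
  | succ n ih =>
    have hsplit : (splitIso Y (n + 1)).hom =
        (splitIso Y n).hom ▷ Y ≫ (α_ Y (TPow Y n) Y).hom := rfl
    rw [chainDesc, chainDesc_of_lt Y (Nat.lt_succ_self n), hsplit]
    erw [Category.assoc, ← comp_whiskerRight_assoc, ih, psiAt_last, Category.assoc,
      Category.assoc]
    exact (braiding_tensor_left_hom (TPow Y n) Y Y).symm

lemma chainInvDown_succ_succ (Y : C) {n k : ℕ} (h : k < n) :
    chainInvDown Y (n + 1) (k + 1) = chainInvDown Y n k ▷ Y ≫ psiInvAt Y (n + 1) n := by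
  induction k with
  | zero =>
    refine (Category.comp_id _).trans ?_
    rw [chainInvDown, id_whiskerRight]
    exact (Category.id_comp _).symm
  | succ k ih =>
    rw [chainInvDown, ih (by omega), chainInvDown, Nat.succ_sub_succ,
      psiInvAt_of_lt Y (by omega : n - (k + 1) < n), comp_whiskerRight]
    exact (Category.assoc _ _ _).symm

lemma chainDesc_contractHead_eq_chainInvDown_contractTail (Y : C) (p : Y ⊗ Y ⟶ 𝟙_ C)
    (j k : ℕ) :
    (β_ (TPow Y (j + k + 1)) Y).hom ≫
        Y ◁ (chainDesc Y (j + k + 1) j ≫ (splitIso Y (j + k)).hom) ≫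
        contractHead p (TPow Y (j + k)) =
      chainInvDown Y (j + k + 1) k ▷ Y ≫ contractTail ((β_ Y Y).hom ≫ p) (TPow Y (j + k)) := by
  induction k with
  | zero =>
    show (β_ (TPow Y (j + 1)) Y).hom ≫ Y ◁ (chainDesc Y (j + 1) j ≫ (splitIso Y j).hom) ≫
        contractHead p (TPow Y j) = 𝟙 _ ▷ Y ≫ contractTail ((β_ Y Y).hom ≫ p) (TPow Y j)
    rw [chainDesc_self_comp_splitIso, id_whiskerRight, Category.id_comp]
    exact braiding_whiskerLeft_braiding_contractHead p (TPow Y j)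
  | succ k ih =>
    have hL : chainDesc Y (j + k + 2) j ≫ (splitIso Y (j + k + 1)).hom =
        (chainDesc Y (j + k + 1) j ≫ (splitIso Y (j + k)).hom) ▷ Y ≫
          (α_ Y (TPow Y (j + k)) Y).hom := by
      rw [chainDesc_of_lt Y (by omega), comp_whiskerRight, Category.assoc]
      rfl
    have hR : chainInvDown Y (j + k + 2) (k + 1) = chainInvDown Y (j + k + 1) k ▷ Y ≫
        (α_ (TPow Y (j + k)) Y Y).hom ≫ TPow Y (j + k) ◁ (β_ Y Y).inv ≫
        (α_ (TPow Y (j + k)) Y Y).inv := by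
      rw [chainInvDown_succ_succ Y (by omega), psiInvAt_last]
      rfl
    erw [hL, braiding_whiskerLeft_contractHead_succ, ih, hR]
    exact (contractTail_succ _ _).symm

lemma gaussStep_eq [Preadditive C] (X Y : C) (ev : X ⊗ Y ⟶ 𝟙_ C) (γ : X ≅ Y) (m : ℕ) :
    gaussStep X Y ev γ m =
      (β_ (TPow Y (m + 1)) Y).hom ≫ Y ◁ (bint Y (m + 1) ≫ (splitIso Y m).hom) ≫
        contractHead (γ.inv ▷ Y ≫ ev) (TPow Y m) := by
  rw [gaussStep, psiLast]
  erw [reassoc_of% chainDesc_self_comp_splitIso]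
  rw [tensorHom_id, id_tensorHom, id_tensorHom, ← whisker_exchange_assoc,
    ← whisker_exchange_assoc, tensorHom_id, contractHead]
  monoidal

variable [Preadditive C] [MonoidalPreadditive C]

lemma bint_contractHead_eq_bint'_contractTail (Y : C) (p : Y ⊗ Y ⟶ 𝟙_ C) (m : ℕ) :
    (β_ (TPow Y (m + 1)) Y).hom ≫ Y ◁ (bint Y (m + 1) ≫ (splitIso Y m).hom) ≫
        contractHead p (TPow Y m) =
      bint' Y (m + 1) ▷ Y ≫ contractTail ((β_ Y Y).hom ≫ p) (TPow Y m) := by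
  simp only [bint, bint', Preadditive.sum_comp, whiskerLeft_sum, sum_whiskerRight,
    Preadditive.comp_sum]
  erw [Preadditive.sum_comp]
  refine (Finset.sum_range_reflect _ (m + 1)).symm.trans (Finset.sum_congr rfl fun k hk => ?_)
  obtain ⟨j, rfl⟩ : ∃ j, m = j + k :=
    ⟨m - k, (Nat.sub_add_cancel (Nat.lt_succ_iff.mp (Finset.mem_range.mp hk))).symm⟩
  rw [show j + k + 1 - 1 - k = j by omega]
  exact chainDesc_contractHead_eq_chainInvDown_contractTail Y p j k

end

theorem braided_wick_exchange_general
    (X Y : C) (ev : X ⊗ Y ⟶ 𝟙_ C)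
    (γ : X ≅ Y)
    (m : ℕ) (W : TPow Y m ⟶ 𝟙_ C) :
    gaussStep X Y ev γ m ≫ W =
      (bint' Y (m + 1) ⊗ₘ 𝟙 Y) ≫
      (α_ (TPow Y m) Y Y).hom ≫
      (W ⊗ₘ ((𝟙 Y ⊗ₘ γ.inv) ≫ (β_ Y X).hom ≫ ev)) ≫
      (λ_ (𝟙_ C)).hom := by
  have hZ : (𝟙 Y ⊗ₘ γ.inv) ≫ (β_ Y X).hom ≫ ev = (β_ Y Y).hom ≫ γ.inv ▷ Y ≫ ev := by
    rw [id_tensorHom, braiding_naturality_right_assoc]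
  rw [gaussStep_eq, bint_contractHead_eq_bint'_contractTail, tensorHom_id, hZ]
  exact (Category.assoc _ _ _).trans (whisker_eq _ (contractTail_comp _ W))

/-- the key exchange identity in the proof of the Braided Wick Theorem:
for `n = m + 2 ≥ 2` and any `W : Y^{⊗(n-2)} → 𝟙`,
`W ∘ (ev ⊗ id^{⊗(n-2)}) ∘ (id_X ⊗ [n-1]) ∘ (γ⁻¹ ⊗ id^{⊗(n-1)}) ∘ ψ_{n-1,1}
  = (W ⊗ Z₂) ∘ ([n−1]′ ⊗ id_Y)`,
where `Z₂ = ev ∘ ψ_{Y,X} ∘ (id_Y ⊗ γ⁻¹)` (with `𝟙 ⊗ 𝟙 ≅ 𝟙` and coherences inserted). -/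
theorem braided_wick_exchange
    (X Y : C) (ev : X ⊗ Y ⟶ 𝟙_ C) (coev : 𝟙_ C ⟶ Y ⊗ X)
    (hzig1 : (ρ_ X).inv ≫ (𝟙 X ⊗ₘ coev) ≫ (α_ X Y X).inv ≫ (ev ⊗ₘ 𝟙 X) ≫ (λ_ X).hom = 𝟙 X)
    (hzig2 : (λ_ Y).inv ≫ (coev ⊗ₘ 𝟙 Y) ≫ (α_ Y X Y).hom ≫ (𝟙 Y ⊗ₘ ev) ≫ (ρ_ Y).hom = 𝟙 Y)
    (γ : X ≅ Y)
    (m : ℕ) (W : TPow Y m ⟶ 𝟙_ C) :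
    gaussStep X Y ev γ m ≫ W =
      (bint' Y (m + 1) ⊗ₘ 𝟙 Y) ≫
      (α_ (TPow Y m) Y Y).hom ≫
      (W ⊗ₘ ((𝟙 Y ⊗ₘ γ.inv) ≫ (β_ Y X).hom ≫ ev)) ≫
      (λ_ (𝟙_ C)).hom :=
  braided_wick_exchange_general X Y ev γ m W
end

section
/- Relation between the two families of braided integers: for every object Y of 𝒞 and every n ≥ 1, [n]′ = (ψ_{n-1,1})^{-1} ∘ [n]; equivalently, ψ_1∘ψ_2∘⋯∘ψ_{n-1}∘[n]′ = [n] as endomorphisms of Y^{⊗n}. -/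
open CategoryTheory MonoidalCategory

universe v u

variable {C : Type u} [Category.{v} C] [MonoidalCategory C] [BraidedCategory C]
variable [Preadditive C] [MonoidalPreadditive C]

/-!
Composing the `j`-th summand of `[n]′` with `ψ_{n-1,1} = ψ_1∘⋯∘ψ_{n-1}` cancels its inverse
braidings `ψ_{n-1}⁻¹, …, ψ_{n-j}⁻¹` one by one against the outermost factors of `ψ_{n-1,1}`,
leaving `ψ_1∘⋯∘ψ_{n-1-j}`, the `(n-1-j)`-th summand of `[n]`. Reindexing `j ↦ n-1-j` finishes.
-/

omit [Preadditive C] [MonoidalPreadditive C] in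
theorem psiInvAt_comp_psiAt (Y : C) : ∀ n i : ℕ, psiInvAt Y n i ≫ psiAt Y n i = 𝟙 _
  | 0, _ | 1, _ => by simp [psiInvAt, psiAt]
  | n + 2, i => by
    by_cases h : i = n + 1
    · simp [psiInvAt, psiAt, swapLast, h, TPow]
    · simp only [psiInvAt, psiAt, h]
      erw [tensorHom_comp_tensorHom, psiInvAt_comp_psiAt Y (n + 1) i]
      simp [TPow]

omit [Preadditive C] [MonoidalPreadditive C] in
theorem chainInvDown_comp_psiLast (Y : C) (n : ℕ) :
    ∀ j, j < n → chainInvDown Y n j ≫ psiLast Y n = chainDesc Y n (n - 1 - j)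
  | 0, _ => by simp [chainInvDown, psiLast]
  | j + 1, hj => by
    have hsucc : n - 1 - j = n - 1 - (j + 1) + 1 := by omega
    have hidx : n - (j + 1) = n - 1 - (j + 1) + 1 := by omega
    rw [chainInvDown, Category.assoc, chainInvDown_comp_psiLast Y n j (by omega), hsucc,
      chainDesc, hidx, ← Category.assoc, psiInvAt_comp_psiAt, Category.id_comp]

theorem bint'_eq_general (Y : C) (n : ℕ) :
    bint' Y n ≫ psiLast Y n = bint Y n := by
  rw [bint', bint, Preadditive.sum_comp, ← Finset.sum_range_reflect (chainDesc Y n)]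
  exact Finset.sum_congr rfl fun j hj ↦ chainInvDown_comp_psiLast Y n j (Finset.mem_range.mp hj)

/-- `ψ_1∘ψ_2∘⋯∘ψ_{n-1}∘[n]′ = [n]`, i.e. `[n]′ = (ψ_{n-1,1})⁻¹ ∘ [n]`. -/
theorem bint'_eq (Y : C) (n : ℕ) (hn : 1 ≤ n) :
    bint' Y n ≫ psiLast Y n = bint Y n :=
  bint'_eq_general Y n
end

section
/- Let G be a topological group and K a subgroup. For every n ≥ 1 the bijection ρₙ : ((K\G)ⁿ)/G → ((K\G)^{n-1})/K induced by (Kg₁, …, Kgₙ) ↦ (Kg₁gₙ^{-1}, …, Kg_{n-1}gₙ^{-1}) is a homeomorphism, where K\G carries the quotient topology from G, cartesian products carry the product topology, and the orbit sets ((K\G)ⁿ)/G and ((K\G)^{n-1})/K carry the quotient topologies. -/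
variable {G : Type*} [Group G]

/-- The space `K\G` of right cosets `Kg`. -/
abbrev RCoset (G : Type*) [Group G] (K : Subgroup G) : Type _ :=
  Quotient (QuotientGroup.rightRel K)

/-- The right coset `Kg` of `g`. -/
def rc (K : Subgroup G) (g : G) : RCoset G K :=
  Quotient.mk (QuotientGroup.rightRel K) g

/-- The right action of `G` on `K\G`: `(Kg)·h = K(gh)`. -/
def rcSMul (K : Subgroup G) (x : RCoset G K) (g : G) : RCoset G K :=
  Quotient.map' (· * g)
    (fun a b h => by
      rw [QuotientGroup.rightRel_apply] at h ⊢
      have : b * g * (a * g)⁻¹ = b * a⁻¹ := by group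
      rw [this]; exact h) x

theorem rcSMul_mk (K : Subgroup G) (g h : G) : rcSMul K (rc K g) h = rc K (g * h) := rfl

theorem rcSMul_one (K : Subgroup G) (x : RCoset G K) : rcSMul K x 1 = x := by
  induction x using Quotient.ind with
  | _ a => show rc K (a * 1) = rc K a; rw [mul_one]

theorem rcSMul_mul (K : Subgroup G) (x : RCoset G K) (g h : G) :
    rcSMul K (rcSMul K x g) h = rcSMul K x (g * h) := by
  induction x using Quotient.ind with
  | _ a => show rc K (a * g * h) = rc K (a * (g * h)); rw [mul_assoc]

/-- The orbit equivalence relation on `(K\G)ⁿ` for the diagonal right `G`-action. -/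
def orbRelG (K : Subgroup G) (n : ℕ) : Setoid (Fin n → RCoset G K) where
  r x y := ∃ g : G, ∀ i, rcSMul K (x i) g = y i
  iseqv := by
    refine ⟨fun x => ⟨1, fun i => rcSMul_one K (x i)⟩, ?_, ?_⟩
    · rintro x y ⟨g, hg⟩
      exact ⟨g⁻¹, fun i => by
        rw [← hg i, rcSMul_mul, mul_inv_cancel, rcSMul_one]⟩
    · rintro x y z ⟨g, hg⟩ ⟨h, hh⟩
      exact ⟨g * h, fun i => by rw [← rcSMul_mul, hg i, hh i]⟩

/-- The orbit equivalence relation on `(K\G)ⁿ` for the diagonal right `K`-action. -/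
def orbRelK (K : Subgroup G) (n : ℕ) : Setoid (Fin n → RCoset G K) where
  r x y := ∃ g : K, ∀ i, rcSMul K (x i) (g : G) = y i
  iseqv := by
    refine ⟨fun x => ⟨1, fun i => rcSMul_one K (x i)⟩, ?_, ?_⟩
    · rintro x y ⟨g, hg⟩
      exact ⟨g⁻¹, fun i => by
        rw [← hg i, rcSMul_mul]
        show rcSMul K (x i) ((g : G) * (g : G)⁻¹) = x i
        rw [mul_inv_cancel, rcSMul_one]⟩
    · rintro x y z ⟨g, hg⟩ ⟨h, hh⟩
      exact ⟨g * h, fun i => by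
        show rcSMul K (x i) ((g : G) * (h : G)) = z i
        rw [← rcSMul_mul, hg i, hh i]⟩

/-!
Both orbit spaces are quotients of powers of `G`: `Gⁿ → (K\G)ⁿ` is a product of open quotient
maps, hence a quotient map, and the orbit map is a further quotient. On representatives the
bijection and its inverse are the continuous maps `g ↦ (gᵢ g_last⁻¹)ᵢ` and `g ↦ (g, 1)`, which
respect the two orbit relations and are mutually inverse up to them, so both descend to
continuous maps of the quotients.
-/

namespace Topology.IsQuotientMap

variable {X Y X' Y' : Type*} [TopologicalSpace X] [TopologicalSpace Y] [TopologicalSpace X']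
  [TopologicalSpace Y'] {p : X → Y} {q : X' → Y'}

theorem exists_homeomorph_of_factorsThrough (hp : IsQuotientMap p) (hq : IsQuotientMap q)
    (f : C(X, X')) (f' : C(X', X)) (hf : (q ∘ f).FactorsThrough p)
    (hf' : (p ∘ f').FactorsThrough q) (hf'f : ∀ x, p (f' (f x)) = p x)
    (hff' : ∀ x', q (f (f' x')) = q x') :
    ∃ e : Y ≃ₜ Y', (∀ x, e (p x) = q (f x)) ∧ ∀ x', e.symm (q x') = p (f' x') := by
  let P : C(X, Y) := ⟨p, hp.continuous⟩
  let Q : C(X', Y') := ⟨q, hq.continuous⟩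
  let e : C(Y, Y') := hp.lift (f := P) (Q.comp f) hf
  let e' : C(Y', Y) := hq.lift (f := Q) (P.comp f') hf'
  have he (x : X) : e (p x) = q (f x) :=
    DFunLike.congr_fun (hp.lift_comp (f := P) (Q.comp f) hf) x
  have he' (x' : X') : e' (q x') = p (f' x') :=
    DFunLike.congr_fun (hq.lift_comp (f := Q) (P.comp f') hf') x'
  refine ⟨⟨⟨e, e', hp.surjective.forall.2 fun x => ?_, hq.surjective.forall.2 fun x' => ?_⟩,
    e.continuous, e'.continuous⟩, he, he'⟩
  · rw [he, he', hf'f]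
  · rw [he', he, hff']

end Topology.IsQuotientMap

section

theorem rc_eq_rc_iff (K : Subgroup G) {a b : G} : rc K a = rc K b ↔ b * a⁻¹ ∈ K :=
  Quotient.eq.trans QuotientGroup.rightRel_apply

def divLast {n : ℕ} (g : Fin (n + 1) → G) : Fin n → G :=
  fun i => g i.castSucc * (g (Fin.last n))⁻¹

theorem divLast_snoc_one {n : ℕ} (g : Fin n → G) :
    divLast (Fin.snoc (α := fun _ => G) g 1) = g := by
  funext i
  simp [divLast]

variable (K : Subgroup G) {n : ℕ}

theorem orbRelK_divLast {g g' : Fin (n + 1) → G}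
    (hgg' : orbRelG K (n + 1) (rc K ∘ g) (rc K ∘ g')) :
    orbRelK K n (rc K ∘ divLast g) (rc K ∘ divLast g') := by
  obtain ⟨h, hh⟩ := hgg'
  have hmem (i) : g' i * (g i * h)⁻¹ ∈ K := (rc_eq_rc_iff K).1 (hh i)
  have hk : g (Fin.last n) * h * (g' (Fin.last n))⁻¹ ∈ K := by
    simpa using K.inv_mem (hmem (Fin.last n))
  refine ⟨⟨_, hk⟩, fun i => ?_⟩
  simp only [Function.comp_apply, divLast, rcSMul_mk, rc_eq_rc_iff]
  convert hmem i.castSucc using 1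
  group

theorem orbRelG_snoc_one {g g' : Fin n → G} (hgg' : orbRelK K n (rc K ∘ g) (rc K ∘ g')) :
    orbRelG K (n + 1) (rc K ∘ Fin.snoc (α := fun _ => G) g 1)
      (rc K ∘ Fin.snoc (α := fun _ => G) g' 1) := by
  obtain ⟨k, hk⟩ := hgg'
  refine ⟨k, Fin.lastCases ?_ fun i => ?_⟩
  · simp [rcSMul_mk, rc_eq_rc_iff]
  · simpa using hk i

theorem orbRelG_snoc_divLast (g : Fin (n + 1) → G) :
    orbRelG K (n + 1) (rc K ∘ Fin.snoc (α := fun _ => G) (divLast g) 1) (rc K ∘ g) :=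
  ⟨g (Fin.last n), Fin.lastCases (by simp [rcSMul_mk]) fun i => by simp [rcSMul_mk, divLast]⟩

end

section

open Topology

variable [TopologicalSpace G]

theorem continuous_divLast [ContinuousMul G] [ContinuousInv G] {n : ℕ} :
    Continuous (divLast : (Fin (n + 1) → G) → Fin n → G) := by
  unfold divLast
  fun_prop

variable [ContinuousMul G] (K : Subgroup G)

theorem isOpenQuotientMap_rc : IsOpenQuotientMap (rc K) :=
  MulAction.isOpenQuotientMap_quotientMk

/-- Products of quotient maps need not be quotient maps; products of open ones are. -/
theorem isQuotientMap_mk_comp_rc {ι : Type*} (s : Setoid (ι → RCoset G K)) :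
    IsQuotientMap fun g : ι → G => Quotient.mk s fun i => rc K (g i) :=
  isQuotientMap_quot_mk.comp
    (IsOpenQuotientMap.piMap fun _ => isOpenQuotientMap_rc K).isQuotientMap

end

/-- for a topological group `G` and every `n ≥ 1` (here `n + 1`), the bijection
`((K\G)^{n+1})/G ≃ ((K\G)ⁿ)/K` induced by
`(Kg₁, …, Kg_{n+1}) ↦ (Kg₁g_{n+1}⁻¹, …, Kgₙg_{n+1}⁻¹)` is a homeomorphism, where `K\G`
carries the quotient topology, products the product topology, and orbit sets the quotient
topologies. -/
theorem coset_orbit_reduction_homeomorph (G : Type*) [Group G] [TopologicalSpace G]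
    [IsTopologicalGroup G] (K : Subgroup G) (n : ℕ) :
    ∃ ρ : Quotient (orbRelG K (n + 1)) ≃ₜ Quotient (orbRelK K n),
      (∀ g : Fin (n + 1) → G,
        ρ (Quotient.mk (orbRelG K (n + 1)) (fun i => rc K (g i))) =
          Quotient.mk (orbRelK K n)
            (fun i : Fin n => rc K (g i.castSucc * (g (Fin.last n))⁻¹))) ∧
      (∀ g : Fin n → G,
        ρ.symm (Quotient.mk (orbRelK K n) (fun i => rc K (g i))) =
          Quotient.mk (orbRelG K (n + 1))
            (Fin.snoc (fun i : Fin n => rc K (g i)) (rc K 1))) := by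
  obtain ⟨ρ, hρ, hρ_symm⟩ :=
    (isQuotientMap_mk_comp_rc K (orbRelG K (n + 1))).exists_homeomorph_of_factorsThrough
      (isQuotientMap_mk_comp_rc K (orbRelK K n)) ⟨divLast, continuous_divLast⟩
      ⟨fun g => Fin.snoc (α := fun _ => G) g 1, by fun_prop⟩
      (fun _ _ h => Quotient.sound (orbRelK_divLast K (Quotient.exact h)))
      (fun _ _ h => Quotient.sound (orbRelG_snoc_one K (Quotient.exact h)))
      (fun g => Quotient.sound (orbRelG_snoc_divLast K g))
      (fun g => congrArg _ (congrArg (rc K ∘ ·) (divLast_snoc_one g)))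
  exact ⟨ρ, hρ, fun g => (hρ_symm g).trans (congrArg _ (Fin.comp_snoc (rc K) g 1))⟩
end

section
/- For every real q > 1 and every real m ≠ 0, the loop series converges: the family l ↦ [2l+1]_q · q^{−2l(l+1)} / ([l]_q·[l+1]_q + m²) over l ∈ ℕ is summable. -/
/-- The `q`-integer `[n]_q = (qⁿ − q⁻ⁿ)/(q − q⁻¹)`. -/
noncomputable def qint (q : ℝ) (n : ℕ) : ℝ := (q ^ (n : ℤ) - q ^ (-(n : ℤ))) / (q - q⁻¹)

/-- for every real `q > 1` and every real `m ≠ 0`, the loop series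
`Σ_{l=0}^∞ [2l+1]_q · q^{−2l(l+1)} / ([l]_q·[l+1]_q + m²)` converges (is summable). -/
theorem loop_series_summable (q : ℝ) (hq : 1 < q) (m : ℝ) (hm : m ≠ 0) :
    Summable (fun l : ℕ =>
      qint q (2 * l + 1) * q ^ (-(2 * (l : ℤ) * ((l : ℤ) + 1))) /
        (qint q l * qint q (l + 1) + m ^ 2)) := by
  have hq0 : (0:ℝ) < q := lt_trans one_pos hq
  have hinv1 : q⁻¹ < 1 := inv_lt_one_of_one_lt₀ hq
  have hinv0 : (0:ℝ) < q⁻¹ := inv_pos.mpr hq0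
  have hd : (0:ℝ) < q - q⁻¹ := by linarith
  have hm2 : (0:ℝ) < m ^ 2 := by positivity
  have hqint_nonneg : ∀ n : ℕ, 0 ≤ qint q n := by
    intro n
    apply div_nonneg _ hd.le
    have : q ^ (-(n:ℤ)) ≤ q ^ (n:ℤ) := zpow_le_zpow_right₀ hq.le (by omega)
    linarith
  have hqint_le : ∀ n : ℕ, qint q n ≤ q ^ (n:ℤ) / (q - q⁻¹) := by
    intro n
    unfold qint
    have : (0:ℝ) < q ^ (-(n:ℤ)) := zpow_pos hq0 _
    gcongr
    linarith
  -- geometric bound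
  have hsum : Summable (fun l : ℕ => q ^ (1 - 2*(l:ℤ)) / ((q - q⁻¹) * m ^ 2)) := by
    have h1 : Summable (fun l : ℕ => (q⁻¹ ^ 2) ^ l) :=
      summable_geometric_of_lt_one (by positivity) (by nlinarith)
    have h2 := h1.mul_left (q / ((q - q⁻¹) * m ^ 2))
    refine h2.congr fun l => ?_
    have hpow : (q⁻¹ ^ 2) ^ l = q ^ (-(2 * (l:ℤ))) := by
      rw [← pow_mul, ← zpow_natCast q⁻¹, inv_zpow, ← zpow_neg]
      congr 1
    rw [hpow, zpow_sub₀ hq0.ne', zpow_one, zpow_neg, mul_comm 2 (l:ℤ)]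
    ring
  apply Summable.of_nonneg_of_le _ _ hsum
  · intro l
    have hD : 0 < qint q l * qint q (l + 1) + m ^ 2 := by
      have := mul_nonneg (hqint_nonneg l) (hqint_nonneg (l+1))
      linarith
    have hN : 0 ≤ qint q (2 * l + 1) * q ^ (-(2 * (l : ℤ) * ((l : ℤ) + 1))) :=
      mul_nonneg (hqint_nonneg _) (zpow_pos hq0 _).le
    exact div_nonneg hN hD.le
  · intro l
    have hD : m ^ 2 ≤ qint q l * qint q (l + 1) + m ^ 2 := by
      have := mul_nonneg (hqint_nonneg l) (hqint_nonneg (l+1))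
      linarith
    have hN : qint q (2 * l + 1) * q ^ (-(2 * (l : ℤ) * ((l : ℤ) + 1)))
        ≤ q ^ (1 - 2*(l:ℤ)) / (q - q⁻¹) := by
      calc qint q (2 * l + 1) * q ^ (-(2 * (l : ℤ) * ((l : ℤ) + 1)))
          ≤ q ^ ((2 * l + 1 : ℕ) : ℤ) / (q - q⁻¹) * q ^ (-(2 * (l : ℤ) * ((l : ℤ) + 1))) := by
            exact mul_le_mul_of_nonneg_right (hqint_le _) (zpow_pos hq0 _).le
        _ = q ^ (((2 * l + 1 : ℕ) : ℤ) + (-(2 * (l : ℤ) * ((l : ℤ) + 1)))) / (q - q⁻¹) := by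
            rw [div_mul_eq_mul_div, ← zpow_add₀ hq0.ne']
        _ ≤ q ^ (1 - 2*(l:ℤ)) / (q - q⁻¹) := by
            gcongr
            · exact hq.le
            · push_cast
              nlinarith [sq_nonneg ((l:ℤ) - 1), sq_nonneg (l:ℤ)]
    calc qint q (2 * l + 1) * q ^ (-(2 * (l : ℤ) * ((l : ℤ) + 1))) /
          (qint q l * qint q (l + 1) + m ^ 2)
        ≤ qint q (2 * l + 1) * q ^ (-(2 * (l : ℤ) * ((l : ℤ) + 1))) / m ^ 2 := by
          apply div_le_div_of_nonneg_left _ hm2 hD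
          exact mul_nonneg (hqint_nonneg _) (zpow_pos hq0 _).le
      _ ≤ q ^ (1 - 2*(l:ℤ)) / (q - q⁻¹) / m ^ 2 := by gcongr
      _ = q ^ (1 - 2*(l:ℤ)) / ((q - q⁻¹) * m ^ 2) := by rw [div_div]
end

section
/- Fix a real m ≠ 0. There exist real constants c₁ and c₂, independent of q, such that for every real q > 1: c₁ + ∫₁^∞ (2/l)·q^{−2l²} dl ≤ δ_loop(q) ≤ c₂ + ∫₁^∞ (2/l)·q^{−2l²} dl (in particular the integral ∫₁^∞ (2/l)·q^{−2l²} dl is finite for every q > 1). -/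
open MeasureTheory

/-- The loop sum `δ_loop(q) = Σ_{l=0}^∞ [2l+1]_q · q^{−2l(l+1)} / ([l]_q·[l+1]_q + m²)`. -/
noncomputable def deltaLoop (q m : ℝ) : ℝ :=
  ∑' l : ℕ,
    qint q (2 * l + 1) * q ^ (-(2 * (l : ℤ) * ((l : ℤ) + 1))) /
      (qint q l * qint q (l + 1) + m ^ 2)

/-!
Writing `[n]_q = q ^ (n - 1) + q ^ (n - 3) + ⋯ + q ^ (1 - n)` gives `n ≤ [n]_q ≤ n q ^ (n - 1)`.
For `l ≥ 1` these bounds put the `l`-th term of `δ_loop(q)` below `(2/l) q^{-2l²}` and above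
`(2l+1)/(l(l+1)+m²) · q^{-2l²} q^{-4l}`; by Bernoulli's inequality `1 - q^{-4l} ≤ 4l (1 - q⁻¹)`,
so the gap to `(2/l) q^{-2l²}` is at most `(1+2m²)/l² + 8 (1 - q⁻¹) q^{-l}`, whose sum over `l`
is bounded independently of `q`. The `l = 0` term is `1/m²`, and since `x ↦ (2/x) q^{-2x²}` is
antitone, its sum over `l ≥ 1` lies between its integral over `[1, ∞)` and that integral plus `2`.
-/

section QInteger

variable {q : ℝ}

theorem sub_inv_pos_of_one_lt (hq : 1 < q) : 0 < q - q⁻¹ :=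
  sub_pos.2 ((inv_lt_one_of_one_lt₀ hq).trans hq)

theorem qint_zero (q : ℝ) : qint q 0 = 0 := by simp [qint]

theorem qint_one (hq : q - q⁻¹ ≠ 0) : qint q 1 = 1 := by simp [qint, div_self hq]

theorem qint_eq_sum (hq : q - q⁻¹ ≠ 0) (n : ℕ) :
    qint q n = ∑ k ∈ Finset.range n, q ^ ((n : ℤ) - 1 - 2 * k) := by
  have hq0 : q ≠ 0 := by rintro rfl; simp at hq
  rw [qint, div_eq_iff hq, Finset.sum_mul]
  have htel := Finset.sum_range_sub' (fun k : ℕ => q ^ ((n : ℤ) - 2 * k)) n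
  simp only [Nat.cast_zero, mul_zero, sub_zero, Nat.cast_add, Nat.cast_one] at htel
  rw [show (n : ℤ) - 2 * n = -n by ring] at htel
  rw [← htel]
  refine Finset.sum_congr rfl fun k _ => ?_
  rw [mul_sub, ← zpow_add_one₀ hq0, ← zpow_sub_one₀ hq0]
  ring_nf

theorem natCast_le_qint (hq : 1 < q) (n : ℕ) : (n : ℝ) ≤ qint q n := by
  have hq0 : 0 < q := one_pos.trans hq
  set e : ℕ → ℤ := fun k => (n : ℤ) - 1 - 2 * k
  -- the exponents `n - 1 - 2k` are symmetric about `0`, so pair `q ^ e` with `q ^ (-e)`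
  have hpair : 2 * qint q n = ∑ k ∈ Finset.range n, (q ^ e k + (q ^ e k)⁻¹) := by
    rw [qint_eq_sum (sub_inv_pos_of_one_lt hq).ne', two_mul, Finset.sum_add_distrib]
    congr 1
    rw [← Finset.sum_range_reflect]
    refine Finset.sum_congr rfl fun k hk => ?_
    rw [← zpow_neg]
    congr 1
    have : ((n - 1 - k : ℕ) : ℤ) = n - 1 - k := by have := Finset.mem_range.1 hk; omega
    simp only [e, this]
    ring
  have hamgm : ∀ z : ℝ, 0 < z → 2 ≤ z + z⁻¹ := fun z hz => by
    have := mul_inv_cancel₀ hz.ne'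
    nlinarith [sq_nonneg (z - 1), inv_pos.2 hz]
  have := Finset.card_nsmul_le_sum (Finset.range n) _ 2
    (fun k _ => hamgm _ (zpow_pos hq0 (e k)))
  simp only [Finset.card_range, nsmul_eq_mul] at this
  linarith

theorem qint_nonneg (hq : 1 < q) (n : ℕ) : 0 ≤ qint q n :=
  (Nat.cast_nonneg n).trans (natCast_le_qint hq n)

theorem qint_le (hq : 1 < q) (n : ℕ) : qint q n ≤ n * q ^ ((n : ℤ) - 1) := by
  rw [qint_eq_sum (sub_inv_pos_of_one_lt hq).ne']
  calc ∑ k ∈ Finset.range n, q ^ ((n : ℤ) - 1 - 2 * k)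
      ≤ ∑ _k ∈ Finset.range n, q ^ ((n : ℤ) - 1) :=
        Finset.sum_le_sum fun k _ => zpow_le_zpow_right₀ hq.le (by omega)
    _ = n * q ^ ((n : ℤ) - 1) := by simp

theorem one_sub_mul_le_zpow_neg (hq : 0 ≤ q) (k : ℕ) : 1 - k * (1 - q⁻¹) ≤ q ^ (-(k : ℤ)) := by
  rw [zpow_neg, zpow_natCast, ← inv_pow]
  have := one_add_mul_le_pow (a := q⁻¹ - 1) (by linarith [inv_nonneg.2 hq]) k
  rw [add_sub_cancel] at this
  linarith

end QInteger

theorem two_mul_add_one_div_le {L : ℝ} (M : ℝ) (hL : 0 < L) (hM : 0 ≤ M) :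
    (2 * L + 1) / (L * (L + 1) + M) ≤ 2 / L := by
  rw [div_le_div_iff₀ (by positivity) hL]
  nlinarith

theorem two_div_le_two_mul_add_one_div_add {L M : ℝ} (hL : 1 ≤ L) (hM : 0 ≤ M) :
    2 / L ≤ (2 * L + 1) / (L * (L + 1) + M) + (1 + 2 * M) / L ^ 2 := by
  have hL0 : 0 < L := one_pos.trans_le hL
  have hD0 : 0 < L * (L + 1) + M := by positivity
  have hgap : 2 / L - (2 * L + 1) / (L * (L + 1) + M) = (L + 2 * M) / (L * (L * (L + 1) + M)) := by
    rw [div_sub_div _ _ hL0.ne' hD0.ne']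
    ring
  have : (L + 2 * M) / (L * (L * (L + 1) + M)) ≤ (1 + 2 * M) / L ^ 2 := by
    rw [div_le_div_iff₀ (by positivity) (by positivity)]
    nlinarith [mul_nonneg hM (by linarith : 0 ≤ L - 1)]
  linarith

noncomputable def loopTerm (q m : ℝ) (l : ℕ) : ℝ :=
  qint q (2 * l + 1) * q ^ (-(2 * (l : ℤ) * ((l : ℤ) + 1))) / (qint q l * qint q (l + 1) + m ^ 2)

noncomputable def loopIntegrand (q x : ℝ) : ℝ := 2 / x * q ^ (-2 * x ^ 2)

theorem loopIntegrand_natCast (q : ℝ) (l : ℕ) :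
    loopIntegrand q l = 2 / l * q ^ (-(2 * (l : ℤ) ^ 2)) := by
  rw [loopIntegrand, ← Real.rpow_intCast]
  push_cast
  ring_nf

section LoopTerm

variable {q : ℝ} (m : ℝ)

theorem loopTerm_zero (hq : q - q⁻¹ ≠ 0) : loopTerm q m 0 = 1 / m ^ 2 := by
  simp [loopTerm, qint_zero, qint_one hq]

theorem loopTerm_nonneg (hq : 1 < q) (l : ℕ) : 0 ≤ loopTerm q m l :=
  div_nonneg (mul_nonneg (qint_nonneg hq _) (zpow_pos (one_pos.trans hq) _).le)
  (add_nonneg (mul_nonneg (qint_nonneg hq _) (qint_nonneg hq _)) (sq_nonneg m))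

theorem natCast_mul_succ_le_qint_mul_add_sq (hq : 1 < q) (l : ℕ) :
    (l : ℝ) * (l + 1) ≤ qint q l * qint q (l + 1) + m ^ 2 := by
  have := mul_le_mul (natCast_le_qint hq l) (natCast_le_qint hq (l + 1)) (by positivity)
    (qint_nonneg hq l)
  push_cast at this
  nlinarith [sq_nonneg m]

theorem loopTerm_le_loopIntegrand (hq : 1 < q) {l : ℕ} (hl : 1 ≤ l) :
    loopTerm q m l ≤ loopIntegrand q l := by
  have hq0 : 0 < q := one_pos.trans hq
  have hL : (1 : ℝ) ≤ l := by exact_mod_cast hl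
  set y := q ^ (-(2 * (l : ℤ) ^ 2))
  have hnum : qint q (2 * l + 1) * q ^ (-(2 * (l : ℤ) * ((l : ℤ) + 1))) ≤ (2 * l + 1) * y := by
    calc _ ≤ (2 * l + 1) * q ^ (2 * (l : ℤ)) * q ^ (-(2 * (l : ℤ) * ((l : ℤ) + 1))) := by
          gcongr
          simpa using qint_le hq (2 * l + 1)
      _ = (2 * l + 1) * y := by
          rw [mul_assoc, ← zpow_add₀ hq0.ne']
          congr 2
          ring
  have hcoef : (2 * l + 1) / (l * (l + 1)) ≤ 2 / (l : ℝ) := by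
    simpa using two_mul_add_one_div_le 0 (by positivity : (0 : ℝ) < l) le_rfl
  rw [loopIntegrand_natCast, loopTerm]
  calc _ ≤ (2 * l + 1) * y / (l * (l + 1)) :=
        div_le_div₀ (by positivity) hnum (by positivity)
          (natCast_mul_succ_le_qint_mul_add_sq m hq l)
    _ = (2 * l + 1) / (l * (l + 1)) * y := by ring
    _ ≤ 2 / l * y := by gcongr

theorem le_loopTerm (hq : 1 < q) {l : ℕ} (hl : 1 ≤ l) :
    (2 * l + 1) / (l * (l + 1) + m ^ 2) * (q ^ (-(2 * (l : ℤ) ^ 2)) * q ^ (-(4 * (l : ℤ))))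
      ≤ loopTerm q m l := by
  have hq0 : 0 < q := one_pos.trans hq
  have hL : (1 : ℝ) ≤ l := by exact_mod_cast hl
  set Q := q ^ (l : ℤ)
  have hQ : 1 ≤ Q := one_le_zpow₀ hq.le (Nat.cast_nonneg l)
  have hQ0 : 0 < Q := zero_lt_one.trans_le hQ
  have hz : q ^ (-(2 * (l : ℤ) * ((l : ℤ) + 1)))
      = q ^ (-(2 * (l : ℤ) ^ 2)) * q ^ (-(4 * (l : ℤ))) * Q ^ 2 := by
    rw [← zpow_natCast Q, ← zpow_mul, ← zpow_add₀ hq0.ne', ← zpow_add₀ hq0.ne']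
    push_cast
    ring_nf
  have hnum : (2 * l + 1) * q ^ (-(2 * (l : ℤ) * ((l : ℤ) + 1)))
      ≤ qint q (2 * l + 1) * q ^ (-(2 * (l : ℤ) * ((l : ℤ) + 1))) := by
    gcongr
    exact_mod_cast natCast_le_qint hq (2 * l + 1)
  have hl_le : qint q l ≤ l * Q :=
    (qint_le hq l).trans (by gcongr; exact zpow_le_zpow_right₀ hq.le (by omega))
  have hl1_le : qint q (l + 1) ≤ (l + 1) * Q := by simpa [Q] using qint_le hq (l + 1)
  have hden : qint q l * qint q (l + 1) + m ^ 2 ≤ (l * (l + 1) + m ^ 2) * Q ^ 2 := by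
    have := mul_le_mul hl_le hl1_le (qint_nonneg hq (l + 1)) (by positivity)
    nlinarith [mul_le_mul_of_nonneg_left (one_le_pow₀ (n := 2) hQ) (sq_nonneg m)]
  rw [loopTerm]
  calc _ = (2 * l + 1) * q ^ (-(2 * (l : ℤ) * ((l : ℤ) + 1))) /
        ((l * (l + 1) + m ^ 2) * Q ^ 2) := by
        rw [hz]
        field_simp
    _ ≤ qint q (2 * l + 1) * q ^ (-(2 * (l : ℤ) * ((l : ℤ) + 1))) /
          (qint q l * qint q (l + 1) + m ^ 2) :=
        div_le_div₀ (mul_nonneg (qint_nonneg hq _) (zpow_pos hq0 _).le) hnum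
          ((by positivity : (0 : ℝ) < l * (l + 1)).trans_le
            (natCast_mul_succ_le_qint_mul_add_sq m hq l)) hden


theorem loopIntegrand_le_loopTerm_add (hq : 1 < q) {l : ℕ} (hl : 1 ≤ l) :
    loopIntegrand q l ≤ loopTerm q m l + (1 + 2 * m ^ 2) / l ^ 2 + 8 * (1 - q⁻¹) * q⁻¹ ^ l := by
  have hq0 : 0 < q := one_pos.trans hq
  have hL : (1 : ℝ) ≤ l := by exact_mod_cast hl
  set y := q ^ (-(2 * (l : ℤ) ^ 2))
  set p := q ^ (-(4 * (l : ℤ)))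
  set c := (2 * (l : ℝ) + 1) / (l * (l + 1) + m ^ 2)
  have hy0 : 0 ≤ y := (zpow_pos hq0 _).le
  have hy1 : y ≤ 1 := zpow_le_one_of_nonpos₀ hq.le (by nlinarith)
  have hyl : y ≤ q⁻¹ ^ l := by
    rw [inv_pow, ← zpow_natCast, ← zpow_neg]
    exact zpow_le_zpow_right₀ hq.le (by nlinarith)
  have hp1 : p ≤ 1 := zpow_le_one_of_nonpos₀ hq.le (by omega)
  have hbern : 1 - p ≤ 4 * l * (1 - q⁻¹) := by
    have := one_sub_mul_le_zpow_neg hq0.le (4 * l)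
    push_cast at this
    linarith
  have hx : 0 ≤ 1 - q⁻¹ := sub_nonneg.2 (inv_le_one_of_one_le₀ hq.le)
  have hc : c ≤ 2 / l := two_mul_add_one_div_le _ (by positivity) (sq_nonneg m)
  have hc' : 2 / l ≤ c + (1 + 2 * m ^ 2) / l ^ 2 :=
    two_div_le_two_mul_add_one_div_add hL (sq_nonneg m)
  rw [loopIntegrand_natCast]
  calc 2 / l * y ≤ (c + (1 + 2 * m ^ 2) / l ^ 2) * y := by gcongr
    _ = c * (y * p) + c * y * (1 - p) + (1 + 2 * m ^ 2) / l ^ 2 * y := by ring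
    _ ≤ loopTerm q m l + 2 / l * y * (4 * l * (1 - q⁻¹)) + (1 + 2 * m ^ 2) / l ^ 2 * 1 := by
        gcongr ?_ + ?_ + ?_
        · exact le_loopTerm m hq hl
        · exact mul_le_mul (mul_le_mul_of_nonneg_right hc hy0) hbern (sub_nonneg.2 hp1)
            (by positivity)
        · exact mul_le_mul_of_nonneg_left hy1 (by positivity)
    _ = loopTerm q m l + (1 + 2 * m ^ 2) / l ^ 2 + 8 * (1 - q⁻¹) * y := by
        field_simp
        ring
    _ ≤ _ := by gcongr

end LoopTerm

section Summation

variable {q : ℝ}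

theorem loopIntegrand_nonneg (hq : 0 ≤ q) {x : ℝ} (hx : 0 ≤ x) : 0 ≤ loopIntegrand q x :=
  mul_nonneg (div_nonneg zero_le_two hx) (Real.rpow_nonneg hq _)

theorem loopIntegrand_antitoneOn (hq : 1 ≤ q) : AntitoneOn (loopIntegrand q) (Set.Ioi 0) := by
  intro x hx y _ hxy
  have hx : 0 < x := hx
  exact mul_le_mul (div_le_div_of_nonneg_left zero_le_two hx hxy)
    (Real.rpow_le_rpow_of_exponent_le hq (by nlinarith)) (Real.rpow_nonneg (by linarith) _)
    (by positivity)

theorem loopIntegrand_natCast_le (hq : 1 ≤ q) (l : ℕ) : loopIntegrand q l ≤ 2 * q⁻¹ ^ l := by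
  rcases l.eq_zero_or_pos with rfl | hl
  · simp [loopIntegrand]
  have hL : (1 : ℝ) ≤ l := by exact_mod_cast hl
  rw [loopIntegrand_natCast, inv_pow, ← zpow_natCast, ← zpow_neg]
  exact mul_le_mul ((div_le_iff₀ (by positivity)).2 (by linarith))
    (zpow_le_zpow_right₀ hq (by nlinarith)) (zpow_pos (zero_lt_one.trans_le hq) _).le zero_le_two

theorem summable_loopIntegrand_natCast (hq : 1 < q) :
    Summable fun n : ℕ => loopIntegrand q n :=
  .of_nonneg_of_le (fun n => loopIntegrand_nonneg (one_pos.trans hq).le (Nat.cast_nonneg n))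
    (loopIntegrand_natCast_le hq.le)
    ((summable_geometric_of_lt_one (by positivity) (inv_lt_one_of_one_lt₀ hq)).mul_left 2)

variable (m : ℝ)

theorem summable_loopTerm_succ (hq : 1 < q) : Summable fun n : ℕ => loopTerm q m (n + 1) :=
  .of_nonneg_of_le (fun n => loopTerm_nonneg m hq (n + 1))
    (fun n => loopTerm_le_loopIntegrand m hq (Nat.le_add_left 1 n))
    ((summable_nat_add_iff 1).2 (summable_loopIntegrand_natCast hq))

theorem tsum_loopTerm_succ_le (hq : 1 < q) :
    ∑' n : ℕ, loopTerm q m (n + 1) ≤ ∑' n : ℕ, loopIntegrand q ↑(n + 1) :=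
  (summable_loopTerm_succ m hq).tsum_le_tsum
    (fun n => loopTerm_le_loopIntegrand m hq (Nat.le_add_left 1 n))
    ((summable_nat_add_iff 1).2 (summable_loopIntegrand_natCast hq))

theorem tsum_loopIntegrand_le (hq : 1 < q) :
    ∑' n : ℕ, loopIntegrand q ↑(n + 1) ≤ ∑' n : ℕ, loopTerm q m (n + 1) +
      ((1 + 2 * m ^ 2) * ∑' n : ℕ, 1 / ((n + 1 : ℕ) : ℝ) ^ 2 + 8) := by
  set x := q⁻¹
  have hx0 : 0 ≤ x := inv_nonneg.2 (one_pos.trans hq).le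
  have hx1 : x < 1 := inv_lt_one_of_one_lt₀ hq
  have hzeta : Summable fun n : ℕ => 1 / ((n + 1 : ℕ) : ℝ) ^ 2 :=
    (summable_nat_add_iff 1).2 (Real.summable_one_div_nat_pow.2 one_lt_two)
  have hgeo : HasSum (fun n : ℕ => (1 - x) * x ^ (n + 1)) x := by
    have := (hasSum_geometric_of_lt_one hx0 hx1).mul_left (x * (1 - x))
    rw [mul_assoc, mul_inv_cancel₀ (sub_pos.2 hx1).ne', mul_one] at this
    exact this.congr_fun fun n => by ring
  have herr : HasSum (fun n : ℕ => (1 + 2 * m ^ 2) / ((n + 1 : ℕ) : ℝ) ^ 2 +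
      8 * (1 - x) * x ^ (n + 1)) ((1 + 2 * m ^ 2) * ∑' n : ℕ, 1 / ((n + 1 : ℕ) : ℝ) ^ 2 + 8 * x) :=
    ((hzeta.hasSum.mul_left _).add (hgeo.mul_left 8)).congr_fun fun n => by ring
  calc ∑' n : ℕ, loopIntegrand q ↑(n + 1)
      ≤ ∑' n : ℕ, (loopTerm q m (n + 1) + ((1 + 2 * m ^ 2) / ((n + 1 : ℕ) : ℝ) ^ 2 +
          8 * (1 - x) * x ^ (n + 1))) :=
        ((summable_nat_add_iff 1).2 (summable_loopIntegrand_natCast hq)).tsum_le_tsum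
          (fun n => by
            have := loopIntegrand_le_loopTerm_add m hq (Nat.le_add_left 1 n)
            linarith)
          ((summable_loopTerm_succ m hq).add herr.summable)
    _ = ∑' n : ℕ, loopTerm q m (n + 1) +
          ((1 + 2 * m ^ 2) * ∑' n : ℕ, 1 / ((n + 1 : ℕ) : ℝ) ^ 2 + 8 * x) := by
        rw [(summable_loopTerm_succ m hq).tsum_add herr.summable, herr.tsum_eq]
    _ ≤ _ := by linarith

end Summation

theorem loopIntegrand_integral_bounds {q : ℝ} (hq : 1 < q) :
    IntegrableOn (loopIntegrand q) (Set.Ioi 1) ∧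
      ∫ x in Set.Ioi 1, loopIntegrand q x ≤ ∑' n : ℕ, loopIntegrand q ↑(n + 1) ∧
      ∑' n : ℕ, loopIntegrand q ↑(n + 1) ≤ 2 + ∫ x in Set.Ioi 1, loopIntegrand q x := by
  have hanti : AntitoneOn (loopIntegrand q) (Set.Ici ((1 : ℕ) : ℝ)) :=
    (loopIntegrand_antitoneOn hq.le).mono fun x hx => one_pos.trans_le (by simpa using hx)
  have hnonneg : ∀ t ∈ Set.Ioi ((1 : ℕ) : ℝ), 0 ≤ loopIntegrand q t := fun t ht =>
    loopIntegrand_nonneg (one_pos.trans hq).le (by simp at ht; linarith)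
  have hsum := summable_loopIntegrand_natCast hq
  have hsum₁ := (summable_nat_add_iff 1).2 hsum
  have hint := hanti.integrableOn_Ioi_of_summable_comp_add hsum₁ hnonneg
  have hfirst : loopIntegrand q ((0 + 1 : ℕ) : ℝ) ≤ 2 := by
    have h := loopIntegrand_natCast_le hq.le 1
    rw [pow_one] at h
    exact h.trans (by linarith [inv_le_one_of_one_le₀ hq.le])
  have htail := hanti.tsum_comp_add_le_integral 1 hint hnonneg
  have hupper := hanti.integral_le_tsum_comp_add 1 hsum hnonneg
  rw [hsum₁.tsum_eq_zero_add]
  simp only [Nat.cast_one] at hint htail hupper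
  refine ⟨hint, ?_, by linarith⟩
  rw [← hsum₁.tsum_eq_zero_add]
  exact hupper

theorem deltaLoop_integral_bounds_general (m : ℝ) :
    ∃ c₁ c₂ : ℝ, ∀ q : ℝ, 1 < q →
      MeasureTheory.IntegrableOn (fun l : ℝ => (2 / l) * q ^ (-2 * l ^ 2)) (Set.Ici 1) ∧
      c₁ + ∫ l in Set.Ici (1 : ℝ), (2 / l) * q ^ (-2 * l ^ 2) ≤ deltaLoop q m ∧
      deltaLoop q m ≤ c₂ + ∫ l in Set.Ici (1 : ℝ), (2 / l) * q ^ (-2 * l ^ 2) := by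
  refine ⟨-((1 + 2 * m ^ 2) * ∑' n : ℕ, 1 / ((n + 1 : ℕ) : ℝ) ^ 2 + 8), 1 / m ^ 2 + 2,
    fun q hq => ?_⟩
  obtain ⟨hint, hle, hge⟩ := loopIntegrand_integral_bounds hq
  have hδ : deltaLoop q m = 1 / m ^ 2 + ∑' n : ℕ, loopTerm q m (n + 1) := by
    rw [← loopTerm_zero m (sub_inv_pos_of_one_lt hq).ne']
    exact (summable_nat_add_iff 1).1 (summable_loopTerm_succ m hq) |>.tsum_eq_zero_add
  change IntegrableOn (loopIntegrand q) _ ∧ _ + ∫ l in _, loopIntegrand q l ≤ _ ∧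
    _ ≤ _ + ∫ l in _, loopIntegrand q l
  rw [integrableOn_Ici_iff_integrableOn_Ioi, integral_Ici_eq_integral_Ioi]
  have := tsum_loopTerm_succ_le m hq
  have := tsum_loopIntegrand_le m hq
  have : 0 ≤ 1 / m ^ 2 := by positivity
  exact ⟨hint, by linarith, by linarith⟩

/-- fix a real `m ≠ 0`. There are constants `c₁, c₂` independent of `q` such
that for every real `q > 1`:
`c₁ + ∫₁^∞ (2/l)·q^{−2l²} dl ≤ δ_loop(q) ≤ c₂ + ∫₁^∞ (2/l)·q^{−2l²} dl`
(in particular the integral is finite for every `q > 1`). -/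
theorem deltaLoop_integral_bounds (m : ℝ) (hm : m ≠ 0) :
    ∃ c₁ c₂ : ℝ, ∀ q : ℝ, 1 < q →
      MeasureTheory.IntegrableOn (fun l : ℝ => (2 / l) * q ^ (-2 * l ^ 2)) (Set.Ici 1) ∧
      c₁ + ∫ l in Set.Ici (1 : ℝ), (2 / l) * q ^ (-2 * l ^ 2) ≤ deltaLoop q m ∧
      deltaLoop q m ≤ c₂ + ∫ l in Set.Ici (1 : ℝ), (2 / l) * q ^ (-2 * l ^ 2) :=
  deltaLoop_integral_bounds_general m
end
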